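/- (Offline error bound, sampled ALP.) Let v* : S → ℝ be a fixed point of B, let ρ and ρ̄ be distributions on S, R a constant-closed set of functions S → ℝ, D ⊆ S × A a set of sampled state–action pairs, and ε_p, ε_c ≥ 0. Assume: (i) every v ∈ R that is D-feasible is ε_p-transitive-feasible; (ii) |ρᵀv − ρ̄ᵀv| ≤ ε_c for every v ∈ R; (iii) v̂ ∈ R is transitive-feasible and minimizes ρᵀ over all transitive-feasible elements of R; (iv) v̄ ∈ R is D-feasible and minimizes ρ̄ᵀ over all D-feasible elements of R. Then for every v ∈ R, ‖v̄ − v*‖_{1,ρ} ≤ (2/(1−γ)) * ‖v − v*‖_∞ + 2ε_c + 2ε_p/(1−γ). -/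

import Mathlib

/-!
The Bellman operator is monotone and shifts constants by a factor `γ`. Evaluating at the state
where `u - v*` is smallest, this gives `u ≥ v* - ε / (1 - γ)` for every `ε`-transitive-feasible
`u`; it also makes `v + (1 + γ) ‖v - v*‖∞ / (1 - γ)` transitive-feasible, which bounds the
optimal value `ρᵀv̂` of the full ALP by `ρᵀv* + 2 ‖v - v*‖∞ / (1 - γ)`. Since `v̂` is also
`D`-feasible, `ρᵀv̄ ≤ ρ̄ᵀv̄ + ε_c ≤ ρ̄ᵀv̂ + ε_c ≤ ρᵀv̂ + 2 ε_c`, and the lower bound on `v̄`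
(which is `ε_p`-transitive-feasible) turns `‖v̄ - v*‖_{1,ρ}` into
`ρᵀ(v̄ - v*) + 2 ε_p / (1 - γ)`.
-/

open Finset

section Weighted

variable {ι : Type*} [Fintype ι] {w : ι → ℝ}

theorem sum_mul_add_const (hw : ∑ i, w i = 1) (u : ι → ℝ) (k : ℝ) :
    ∑ i, w i * (u i + k) = ∑ i, w i * u i + k := by
  simp only [mul_add, sum_add_distrib, ← sum_mul, hw, one_mul]

theorem sum_mul_le_add_of_le_add (hw0 : ∀ i, 0 ≤ w i) (hw1 : ∑ i, w i = 1)
    {u u' : ι → ℝ} {c : ℝ} (h : ∀ i, u i ≤ u' i + c) :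
    ∑ i, w i * u i ≤ ∑ i, w i * u' i + c := by
  rw [← sum_mul_add_const hw1]
  exact sum_le_sum fun i _ => mul_le_mul_of_nonneg_left (h i) (hw0 i)

theorem sum_mul_abs_sub_le (hw0 : ∀ i, 0 ≤ w i) (hw1 : ∑ i, w i = 1)
    {u u' : ι → ℝ} {c : ℝ} (hc : 0 ≤ c) (h : ∀ i, u' i - c ≤ u i) :
    ∑ i, w i * |u i - u' i| ≤ ∑ i, w i * u i - ∑ i, w i * u' i + 2 * c := by
  have habs : ∀ i, |u i - u' i| ≤ (u i - u' i) + 2 * c := fun i =>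
    abs_le.mpr ⟨by linarith [h i], by linarith⟩
  calc ∑ i, w i * |u i - u' i| ≤ ∑ i, w i * (u i - u' i) + 2 * c :=
        sum_mul_le_add_of_le_add hw0 hw1 habs
    _ = ∑ i, w i * u i - ∑ i, w i * u' i + 2 * c := by
        simp only [mul_sub, sum_sub_distrib]

end Weighted

section Bellman

variable {S A : Type*} [Fintype S] (P : A → S → S → ℝ) (r : A → S → ℝ) (γ : ℝ)

def qValue (v : S → ℝ) (a : A) (s : S) : ℝ := r a s + γ * ∑ s', P a s s' * v s'

def bellman [Fintype A] [Nonempty A] (v : S → ℝ) (s : S) : ℝ :=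
  univ.sup' univ_nonempty (qValue P r γ v · s)

def IsTransFeasible [Fintype A] [Nonempty A] (ε : ℝ) (v : S → ℝ) : Prop :=
  ∀ s, bellman P r γ v s - ε ≤ v s

def IsFeasibleOn (D : Set (S × A)) (v : S → ℝ) : Prop :=
  ∀ p ∈ D, qValue P r γ v p.2 p.1 ≤ v p.1

variable {P r γ}

theorem qValue_add_const (hP1 : ∀ a s, ∑ s', P a s s' = 1) (v : S → ℝ) (k : ℝ)
    (a : A) (s : S) :
    qValue P r γ (fun t => v t + k) a s = qValue P r γ v a s + γ * k := by
  simp only [qValue, sum_mul_add_const (hP1 a s)]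
  ring

theorem qValue_mono (hP0 : ∀ a s s', 0 ≤ P a s s') (hγ0 : 0 ≤ γ) {u v : S → ℝ}
    (huv : ∀ s, u s ≤ v s) (a : A) (s : S) : qValue P r γ u a s ≤ qValue P r γ v a s := by
  unfold qValue
  gcongr with s'
  · exact hP0 a s s'
  · exact huv s'

variable [Fintype A] [Nonempty A]

theorem qValue_le_bellman (v : S → ℝ) (a : A) (s : S) :
    qValue P r γ v a s ≤ bellman P r γ v s :=
  le_sup' (qValue P r γ v · s) (mem_univ a)

theorem bellman_add_const (hP1 : ∀ a s, ∑ s', P a s s' = 1) (v : S → ℝ) (k : ℝ) (s : S) :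
    bellman P r γ (fun t => v t + k) s = bellman P r γ v s + γ * k := by
  simp only [bellman, qValue_add_const hP1, sup'_add]

theorem bellman_mono (hP0 : ∀ a s s', 0 ≤ P a s s') (hγ0 : 0 ≤ γ) {u v : S → ℝ}
    (huv : ∀ s, u s ≤ v s) (s : S) : bellman P r γ u s ≤ bellman P r γ v s :=
  sup'_mono_fun fun a _ => qValue_mono hP0 hγ0 huv a s

theorem isTransFeasible_zero_iff {v : S → ℝ} :
    IsTransFeasible P r γ 0 v ↔ ∀ s, bellman P r γ v s ≤ v s := by
  simp only [IsTransFeasible, sub_zero]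

theorem IsTransFeasible.isFeasibleOn {v : S → ℝ} (hv : IsTransFeasible P r γ 0 v)
    (D : Set (S × A)) : IsFeasibleOn P r γ D v := fun p _ =>
  (qValue_le_bellman v p.2 p.1).trans (isTransFeasible_zero_iff.mp hv p.1)

theorem IsTransFeasible.sub_le [Nonempty S] (hP0 : ∀ a s s', 0 ≤ P a s s')
    (hP1 : ∀ a s, ∑ s', P a s s' = 1) (hγ0 : 0 ≤ γ) (hγ1 : γ < 1) {vstar : S → ℝ}
    (hfix : bellman P r γ vstar = vstar) {ε : ℝ} {u : S → ℝ}
    (hu : IsTransFeasible P r γ ε u) (s : S) : vstar s - ε / (1 - γ) ≤ u s := by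
  obtain ⟨s₀, hs₀⟩ := Finite.exists_min (fun t => u t - vstar t)
  set m := u s₀ - vstar s₀
  have hm : ∀ t, vstar t + m ≤ u t := fun t => by linarith [hs₀ t]
  have hBu : vstar s₀ + γ * m ≤ bellman P r γ u s₀ := by
    calc vstar s₀ + γ * m = bellman P r γ (fun t => vstar t + m) s₀ := by
          rw [bellman_add_const hP1, hfix]
      _ ≤ bellman P r γ u s₀ := bellman_mono hP0 hγ0 hm s₀
  have hγ' : 0 < 1 - γ := sub_pos.mpr hγ1
  have hmε : -(ε / (1 - γ)) ≤ m := by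
    rw [neg_le, le_div_iff₀ hγ']
    linarith [hu s₀]
  linarith [hm s]

theorem isTransFeasible_add_const (hP0 : ∀ a s s', 0 ≤ P a s s')
    (hP1 : ∀ a s, ∑ s', P a s s' = 1) (hγ0 : 0 ≤ γ) (hγ1 : γ < 1) {vstar : S → ℝ}
    (hfix : bellman P r γ vstar = vstar) {v : S → ℝ} {d : ℝ}
    (hvd : ∀ s, |v s - vstar s| ≤ d) :
    IsTransFeasible P r γ 0 (fun s => v s + (1 + γ) / (1 - γ) * d) := by
  rw [isTransFeasible_zero_iff]
  intro s
  have hBv : bellman P r γ v s ≤ vstar s + γ * d :=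
    calc bellman P r γ v s ≤ bellman P r γ (fun t => vstar t + d) s :=
          bellman_mono hP0 hγ0 (fun t => by linarith [(abs_le.mp (hvd t)).2]) s
      _ = vstar s + γ * d := by rw [bellman_add_const hP1, hfix]
  have hshift : γ * ((1 + γ) / (1 - γ) * d) + (1 + γ) * d = (1 + γ) / (1 - γ) * d := by
    field_simp [(sub_pos.mpr hγ1).ne']
    ring
  rw [bellman_add_const hP1]
  linarith [(abs_le.mp (hvd s)).1]

end Bellman

theorem offline_error_bound_sampled_ALP_general
    {S A : Type*} [Fintype S] [Nonempty S] [Fintype A] [Nonempty A]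
    (P : A → S → S → ℝ) (r : A → S → ℝ) (γ : ℝ)
    (hP0 : ∀ a s s', 0 ≤ P a s s') (hP1 : ∀ a s, ∑ s', P a s s' = 1)
    (hγ0 : 0 ≤ γ) (hγ1 : γ < 1)
    (B : (S → ℝ) → S → ℝ)
    (hB : ∀ v s, B v s =
      Finset.univ.sup' Finset.univ_nonempty
        (fun a => r a s + γ * ∑ s', P a s s' * v s'))
    (vstar : S → ℝ) (hfix : B vstar = vstar)
    (ρ ρbar : S → ℝ)
    (hρ0 : ∀ s, ρ s ≥ 0) (hρ1 : ∑ s, ρ s = 1)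
    (R : Set (S → ℝ))
    (hR : ∀ u ∈ R, ∀ k : ℝ, (fun s => u s + k) ∈ R)
    (D : Set (S × A)) (εp εc : ℝ) (hεp : 0 ≤ εp)
    -- (i) every D-feasible v ∈ R is εp-transitive-feasible
    (hSampling : ∀ v ∈ R,
      (∀ p ∈ D, v p.1 ≥ r p.2 p.1 + γ * ∑ s', P p.2 p.1 s' * v s') →
      (∀ s, v s ≥ B v s - εp))
    -- (ii) objective estimation error
    (hObj : ∀ v ∈ R, |(∑ s, ρ s * v s) - (∑ s, ρbar s * v s)| ≤ εc)
    -- (iii) vhat optimal for the full ALP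
    (vhat : S → ℝ) (hvhatR : vhat ∈ R) (hvhatTF : ∀ s, vhat s ≥ B vhat s)
    (hvhatOpt : ∀ u ∈ R, (∀ s, u s ≥ B u s) →
      ∑ s, ρ s * vhat s ≤ ∑ s, ρ s * u s)
    -- (iv) vbar optimal for the sampled ALP
    (vbar : S → ℝ) (hvbarR : vbar ∈ R)
    (hvbarD : ∀ p ∈ D, vbar p.1 ≥ r p.2 p.1 + γ * ∑ s', P p.2 p.1 s' * vbar s')
    (hvbarOpt : ∀ u ∈ R,
      (∀ p ∈ D, u p.1 ≥ r p.2 p.1 + γ * ∑ s', P p.2 p.1 s' * u s') →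
      ∑ s, ρbar s * vbar s ≤ ∑ s, ρbar s * u s) :
    ∀ v ∈ R,
      ∑ s, ρ s * |vbar s - vstar s| ≤
        (2 / (1 - γ)) *
          Finset.univ.sup' Finset.univ_nonempty (fun s => |v s - vstar s|)
        + 2 * εc + 2 * εp / (1 - γ) := by
  intro v hv
  obtain rfl : B = bellman P r γ := funext fun v => funext (hB v)
  set d := univ.sup' univ_nonempty fun s => |v s - vstar s|
  have hvd : ∀ s, |v s - vstar s| ≤ d := fun s =>
    le_sup' (fun s => |v s - vstar s|) (mem_univ s)
  have hshift_le :
      ∀ s, v s + (1 + γ) / (1 - γ) * d ≤ vstar s + 2 / (1 - γ) * d := fun s => by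
    have hcoef : (1 + γ) / (1 - γ) * d + d = 2 / (1 - γ) * d := by
      field_simp [(sub_pos.mpr hγ1).ne']
      ring
    linarith [(abs_le.mp (hvd s)).2]
  have hvhat : ∑ s, ρ s * vhat s ≤ ∑ s, ρ s * vstar s + 2 / (1 - γ) * d :=
    (hvhatOpt _ (hR v hv _) (isTransFeasible_zero_iff.mp
      (isTransFeasible_add_const hP0 hP1 hγ0 hγ1 hfix hvd))).trans
      (sum_mul_le_add_of_le_add hρ0 hρ1 hshift_le)
  have hvbar : ∑ s, ρ s * vbar s ≤ ∑ s, ρ s * vhat s + 2 * εc := by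
    have hopt := hvbarOpt vhat hvhatR
      ((isTransFeasible_zero_iff.mpr hvhatTF).isFeasibleOn D)
    linarith [(abs_le.mp (hObj vbar hvbarR)).2, (abs_le.mp (hObj vhat hvhatR)).1]
  have hvbar_lb : ∀ s, vstar s - εp / (1 - γ) ≤ vbar s :=
    IsTransFeasible.sub_le hP0 hP1 hγ0 hγ1 hfix (hSampling vbar hvbarR hvbarD)
  calc ∑ s, ρ s * |vbar s - vstar s|
      ≤ ∑ s, ρ s * vbar s - ∑ s, ρ s * vstar s + 2 * (εp / (1 - γ)) :=
        sum_mul_abs_sub_le hρ0 hρ1 (div_nonneg hεp (sub_pos.mpr hγ1).le) hvbar_lb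
    _ ≤ 2 / (1 - γ) * d + 2 * εc + 2 * εp / (1 - γ) := by
        rw [← mul_div_assoc]
        linarith

theorem offline_error_bound_sampled_ALP
    {S A : Type*} [Fintype S] [Nonempty S] [Fintype A] [Nonempty A]
    (P : A → S → S → ℝ) (r : A → S → ℝ) (γ : ℝ)
    (hP0 : ∀ a s s', 0 ≤ P a s s') (hP1 : ∀ a s, ∑ s', P a s s' = 1)
    (hγ0 : 0 ≤ γ) (hγ1 : γ < 1)
    (B : (S → ℝ) → S → ℝ)
    (hB : ∀ v s, B v s =
      Finset.univ.sup' Finset.univ_nonempty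
        (fun a => r a s + γ * ∑ s', P a s s' * v s'))
    (vstar : S → ℝ) (hfix : B vstar = vstar)
    (ρ ρbar : S → ℝ)
    (hρ0 : ∀ s, ρ s ≥ 0) (hρ1 : ∑ s, ρ s = 1)
    (hρbar0 : ∀ s, ρbar s ≥ 0) (hρbar1 : ∑ s, ρbar s = 1)
    (R : Set (S → ℝ))
    (hR : ∀ u ∈ R, ∀ k : ℝ, (fun s => u s + k) ∈ R)
    (D : Set (S × A)) (εp εc : ℝ) (hεp : 0 ≤ εp) (hεc : 0 ≤ εc)
    -- (i) every D-feasible v ∈ R is εp-transitive-feasible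
    (hSampling : ∀ v ∈ R,
      (∀ p ∈ D, v p.1 ≥ r p.2 p.1 + γ * ∑ s', P p.2 p.1 s' * v s') →
      (∀ s, v s ≥ B v s - εp))
    -- (ii) objective estimation error
    (hObj : ∀ v ∈ R, |(∑ s, ρ s * v s) - (∑ s, ρbar s * v s)| ≤ εc)
    -- (iii) vhat optimal for the full ALP
    (vhat : S → ℝ) (hvhatR : vhat ∈ R) (hvhatTF : ∀ s, vhat s ≥ B vhat s)
    (hvhatOpt : ∀ u ∈ R, (∀ s, u s ≥ B u s) →
      ∑ s, ρ s * vhat s ≤ ∑ s, ρ s * u s)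
    -- (iv) vbar optimal for the sampled ALP
    (vbar : S → ℝ) (hvbarR : vbar ∈ R)
    (hvbarD : ∀ p ∈ D, vbar p.1 ≥ r p.2 p.1 + γ * ∑ s', P p.2 p.1 s' * vbar s')
    (hvbarOpt : ∀ u ∈ R,
      (∀ p ∈ D, u p.1 ≥ r p.2 p.1 + γ * ∑ s', P p.2 p.1 s' * u s') →
      ∑ s, ρbar s * vbar s ≤ ∑ s, ρbar s * u s) :
    ∀ v ∈ R,
      ∑ s, ρ s * |vbar s - vstar s| ≤
        (2 / (1 - γ)) *
          Finset.univ.sup' Finset.univ_nonempty (fun s => |v s - vstar s|)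
        + 2 * εc + 2 * εp / (1 - γ) :=
  offline_error_bound_sampled_ALP_general P r γ hP0 hP1 hγ0 hγ1 B hB vstar hfix ρ ρbar hρ0 hρ1 R hR
    D εp εc hεp hSampling hObj vhat hvhatR hvhatTF hvhatOpt vbar hvbarR hvbarD hvbarOpt
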